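/- arXiv:1401.8086 — 2 statements merged into one kernel-verified Lean document; each statement's English description precedes it below -/
import Mathlib

section
/- For every finite simple graph G = (V,E) and every positive integer r, there exists a partition V = U ⊔ N such that every connected component of the induced subgraph G[U] is contained in some ball of radius r in G, and |N| ≤ |V| · (|V|^{1/(r+1)} − 1)/|V|^{1/(r+1)}. -/
/-- The ball of radius `r` centered at `v` in a graph `G`. -/
def SimpleGraph.gball {V : Type*} (G : SimpleGraph V) (r : ℕ) (v : V) : Set V :=
  {u | G.edist v u ≤ (r : ℕ∞)}

section Aux

variable {V : Type*} [Fintype V] [DecidableEq V] (G : SimpleGraph V) [DecidableRel G.Adj]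

/-- Iterated ball inside `S`. -/
def ballIter (S : Finset V) (v : V) : ℕ → Finset V
  | 0 => {v}
  | (i + 1) => ballIter S v i ∪ S.filter (fun u => ∃ w ∈ ballIter S v i, G.Adj w u)

lemma ballIter_subset (S : Finset V) (v : V) (hv : v ∈ S) :
    ∀ i, ballIter G S v i ⊆ S := by
  intro i
  induction i with
  | zero => simpa [ballIter] using hv
  | succ i ih =>
      simp only [ballIter]
      exact Finset.union_subset ih (Finset.filter_subset _ _)

lemma ballIter_edist (S : Finset V) (v : V) :
    ∀ i, ∀ u ∈ ballIter G S v i, G.edist v u ≤ (i : ℕ∞) := by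
  intro i
  induction i with
  | zero =>
      intro u hu
      simp only [ballIter, Finset.mem_singleton] at hu
      subst hu
      simp [SimpleGraph.edist_self]
  | succ i ih =>
      intro u hu
      simp only [ballIter, Finset.mem_union, Finset.mem_filter] at hu
      rcases hu with hu | ⟨-, w, hw, hadj⟩
      · exact le_trans (ih u hu) (by exact_mod_cast Nat.cast_le.2 (Nat.le_succ i))
      · calc G.edist v u ≤ G.edist v w + G.edist w u := SimpleGraph.edist_triangle
          _ ≤ (i : ℕ∞) + 1 := by
              refine add_le_add (ih w hw) ?_
              rw [SimpleGraph.edist_eq_one_iff_adj.2 hadj]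
          _ = ((i + 1 : ℕ) : ℕ∞) := by push_cast; ring

lemma mem_ballIter_self (S : Finset V) (v : V) : ∀ i, v ∈ ballIter G S v i := by
  intro i
  induction i with
  | zero => simp [ballIter]
  | succ i ihh => rw [ballIter]; exact Finset.mem_union_left _ ihh

lemma ballIter_sep (S : Finset V) (v : V) (i : ℕ) {u u' : V}
    (hu : u ∈ ballIter G S v i) (hu' : u' ∈ S) (hadj : G.Adj u u') :
    u' ∈ ballIter G S v (i + 1) := by
  simp only [ballIter, Finset.mem_union, Finset.mem_filter]
  exact Or.inr ⟨hu', u, hu, hadj⟩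

lemma ballIter_growth {c : ℝ} (r : ℕ) (hc : 1 ≤ c)
    (hcn : (Fintype.card V : ℝ) ≤ c ^ (r + 1)) (S : Finset V) (v : V) :
    ∃ i ≤ r, ((ballIter G S v (i + 1)).card : ℝ) ≤ c * (ballIter G S v i).card := by
  by_contra h
  push_neg at h
  have key : ∀ i ≤ r, c ^ i ≤ ((ballIter G S v i).card : ℝ) := by
    intro i
    induction i with
    | zero => intro _; simp [ballIter]
    | succ i ih =>
        intro hi
        have h1 : c ^ i ≤ ((ballIter G S v i).card : ℝ) :=
          ih (le_trans (Nat.le_succ i) hi)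
        have h2 := h i (Nat.le_of_succ_le hi)
        calc c ^ (i + 1) = c * c ^ i := by ring
          _ ≤ c * ((ballIter G S v i).card : ℝ) :=
              mul_le_mul_of_nonneg_left h1 (by linarith)
          _ ≤ ((ballIter G S v (i + 1)).card : ℝ) := le_of_lt h2
  have h1 : c ^ r ≤ ((ballIter G S v r).card : ℝ) := key r le_rfl
  have h2 : ((ballIter G S v (r + 1)).card : ℝ) ≤ (Fintype.card V : ℝ) := by
    exact_mod_cast Nat.cast_le.2 (Finset.card_le_card (Finset.subset_univ _))
  have h3 := h r le_rfl
  have h4 : c ^ (r + 1) < ((ballIter G S v (r + 1)).card : ℝ) :=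
    calc c ^ (r + 1) = c * c ^ r := by ring
      _ ≤ c * ((ballIter G S v r).card : ℝ) :=
          mul_le_mul_of_nonneg_left h1 (by linarith)
      _ < ((ballIter G S v (r + 1)).card : ℝ) := h3
  linarith

/-- Main inductive construction. -/
lemma main_induct {c : ℝ} (r : ℕ) (hc : 1 ≤ c)
    (hcn : (Fintype.card V : ℝ) ≤ c ^ (r + 1)) :
    ∀ S : Finset V, ∃ (U N : Finset V) (f : V → V),
      U ∪ N = S ∧ Disjoint U N ∧
      (∀ u ∈ U, G.edist (f u) u ≤ (r : ℕ∞)) ∧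
      (∀ u ∈ U, ∀ u' ∈ U, G.Adj u u' → f u = f u') ∧
      c * (N.card : ℝ) ≤ (c - 1) * (S.card : ℝ) := by
  intro S
  induction S using Finset.strongInduction with
  | _ S ih =>
  rcases Finset.eq_empty_or_nonempty S with rfl | ⟨v, hv⟩
  · exact ⟨∅, ∅, id, by simp, by simp, by simp, by simp, by simp⟩
  obtain ⟨i, hir, hi⟩ := ballIter_growth G r hc hcn S v
  set B := ballIter G S v i with hB
  set B' := ballIter G S v (i + 1) with hB'
  have hBB' : B ⊆ B' := by
    rw [hB', ballIter]; exact Finset.subset_union_left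
  have hB'S : B' ⊆ S := ballIter_subset G S v hv (i + 1)
  have hvB' : v ∈ B' := mem_ballIter_self G S v (i + 1)
  have hssub : S \ B' ⊂ S := by
    refine Finset.ssubset_iff_of_subset (Finset.sdiff_subset) |>.2 ⟨v, hv, by simp [hvB']⟩
  obtain ⟨U', N', f', hUN', hdisj', hdist', hadj', hcard'⟩ := ih _ hssub
  have hU'sub : U' ⊆ S \ B' := hUN' ▸ Finset.subset_union_left
  have hN'sub : N' ⊆ S \ B' := hUN' ▸ Finset.subset_union_right
  refine ⟨B ∪ U', (B' \ B) ∪ N', fun u => if u ∈ B then v else f' u, ?_, ?_, ?_, ?_, ?_⟩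
  · -- union
    have : B ∪ (B' \ B) = B' := Finset.union_sdiff_of_subset hBB'
    rw [Finset.union_comm (B' \ B) N']
    rw [show B ∪ U' ∪ (N' ∪ (B' \ B)) = (B ∪ (B' \ B)) ∪ (U' ∪ N') by
      ext x; simp only [Finset.mem_union]; tauto]
    rw [this, hUN', Finset.union_comm]
    exact Finset.sdiff_union_of_subset hB'S
  · -- disjoint
    have d1 : Disjoint B (B' \ B) := Finset.disjoint_sdiff
    have d2 : Disjoint B N' := Finset.disjoint_left.2 fun x hx hx' =>
      (Finset.mem_sdiff.1 (hN'sub hx')).2 (hBB' hx)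
    have d3 : Disjoint U' (B' \ B) := Finset.disjoint_left.2 fun x hx hx' =>
      (Finset.mem_sdiff.1 (hU'sub hx)).2 ((Finset.sdiff_subset) hx')
    exact Finset.disjoint_union_left.2 ⟨Finset.disjoint_union_right.2 ⟨d1, d2⟩,
      Finset.disjoint_union_right.2 ⟨d3, hdisj'⟩⟩
  · -- distance
    intro u hu
    rcases Finset.mem_union.1 hu with hu | hu
    · simp only [hu, if_pos]
      exact le_trans (ballIter_edist G S v i u hu) (by exact_mod_cast Nat.cast_le.2 hir)
    · have hnB : u ∉ B := fun hB0 =>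
        (Finset.mem_sdiff.1 (hU'sub hu)).2 (hBB' hB0)
      simp only [hnB, if_neg, if_false]
      exact hdist' u hu
  · -- adjacency
    intro u hu u' hu' hadj
    rcases Finset.mem_union.1 hu with hu1 | hu1 <;> rcases Finset.mem_union.1 hu' with hu2 | hu2
    · simp [hu1, hu2]
    · -- u ∈ B, u' ∈ U' ⊆ S \ B' : impossible
      exfalso
      have := ballIter_sep G S v i hu1 ((Finset.mem_sdiff.1 (hU'sub hu2)).1) hadj
      exact (Finset.mem_sdiff.1 (hU'sub hu2)).2 this
    · exfalso
      have := ballIter_sep G S v i hu2 ((Finset.mem_sdiff.1 (hU'sub hu1)).1) hadj.symm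
      exact (Finset.mem_sdiff.1 (hU'sub hu1)).2 this
    · have h1 : u ∉ B := fun hB0 => (Finset.mem_sdiff.1 (hU'sub hu1)).2 (hBB' hB0)
      have h2 : u' ∉ B := fun hB0 => (Finset.mem_sdiff.1 (hU'sub hu2)).2 (hBB' hB0)
      simp only [h1, h2, if_neg, if_false]
      exact hadj' u hu1 u' hu2 hadj
  · -- cardinality
    have hdisjN : Disjoint (B' \ B) N' := Finset.disjoint_left.2 fun x hx hx' =>
      (Finset.mem_sdiff.1 (hN'sub hx')).2 ((Finset.sdiff_subset) hx)
    have hcardN : ((B' \ B) ∪ N').card = (B' \ B).card + N'.card :=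
      Finset.card_union_of_disjoint hdisjN
    have hsplit : (S.card : ℝ) = (B'.card : ℝ) + ((S \ B').card : ℝ) := by
      have : B'.card + (S \ B').card = S.card := by
        rw [← Finset.card_union_of_disjoint Finset.disjoint_sdiff,
          Finset.union_sdiff_of_subset hB'S]
      exact_mod_cast this.symm
    have hBcard : ((B' \ B).card : ℝ) = (B'.card : ℝ) - (B.card : ℝ) := by
      have : (B' \ B).card = B'.card - B.card := Finset.card_sdiff_of_subset hBB'
      have h2 : B.card ≤ B'.card := Finset.card_le_card hBB'
      rw [this]
      push_cast [Nat.cast_sub h2]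
      ring
    have step1 : c * ((B' \ B).card : ℝ) ≤ (c - 1) * (B'.card : ℝ) := by
      rw [hBcard]
      nlinarith [hi]
    calc c * ((((B' \ B) ∪ N').card : ℕ) : ℝ)
        = c * ((B' \ B).card : ℝ) + c * (N'.card : ℝ) := by
          rw [hcardN]; push_cast; ring
      _ ≤ (c - 1) * (B'.card : ℝ) + (c - 1) * ((S \ B').card : ℝ) := by
          linarith [step1, hcard']
      _ = (c - 1) * (S.card : ℝ) := by rw [hsplit]; ring

end Aux

theorem stmt_0 {V : Type*} [Fintype V] (G : SimpleGraph V) (r : ℕ) (hr : 0 < r) :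
    ∃ U N : Set V, Disjoint U N ∧ U ∪ N = Set.univ ∧
      (∀ K : (G.induce U).ConnectedComponent, ∃ v : V,
        ∀ w : U, (G.induce U).connectedComponentMk w = K → (w : V) ∈ G.gball r v) ∧
      (N.ncard : ℝ) ≤ (Fintype.card V : ℝ) *
        (((Fintype.card V : ℝ) ^ ((1 : ℝ) / (r + 1)) - 1) /
          (Fintype.card V : ℝ) ^ ((1 : ℝ) / (r + 1))) := by
  classical
  rcases Nat.eq_zero_or_pos (Fintype.card V) with hn0 | hn0
  · -- V is empty
    have hV : IsEmpty V := Fintype.card_eq_zero_iff.1 hn0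
    refine ⟨∅, ∅, by simp, by simp [Set.eq_empty_of_isEmpty], ?_, ?_⟩
    · intro K
      obtain ⟨w0, -⟩ := Quot.exists_rep K
      exact hV.elim ↑w0
    · rw [show ((Fintype.card V : ℕ) : ℝ) = 0 by exact_mod_cast hn0]
      simp
  set c : ℝ := ((Fintype.card V : ℕ) : ℝ) ^ ((1 : ℝ) / (r + 1)) with hc
  have hc1 : 1 ≤ c :=
    Real.one_le_rpow (by exact_mod_cast hn0) (by positivity)
  have hcpow : c ^ (r + 1) = ((Fintype.card V : ℕ) : ℝ) := by
    rw [hc, ← Real.rpow_natCast (((Fintype.card V : ℕ) : ℝ) ^ ((1:ℝ)/(r+1))) (r+1),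
      ← Real.rpow_mul (by positivity)]
    rw [show ((1:ℝ)/(r+1)) * ((r + 1 : ℕ) : ℝ) = 1 by push_cast; field_simp]
    exact Real.rpow_one _
  obtain ⟨U, N, f, hUN, hdisj, hdist, hadj, hcard⟩ :=
    main_induct G r hc1 (le_of_eq hcpow.symm) (Finset.univ : Finset V)
  refine ⟨(U : Set V), (N : Set V), by exact_mod_cast hdisj, ?_, ?_, ?_⟩
  · rw [← Finset.coe_union, hUN, Finset.coe_univ]
  · -- components
    intro K
    obtain ⟨w0, hw0⟩ := Quot.exists_rep K
    refine ⟨f w0, ?_⟩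
    have hconst : ∀ {a b : (U : Set V)} (p : (G.induce (U : Set V)).Walk a b),
        f (a : V) = f (b : V) := by
      intro a b p
      induction p with
      | nil => rfl
      | cons h p ihp =>
          refine Eq.trans ?_ ihp
          exact hadj _ (by exact_mod_cast Subtype.mem _) _
            (by exact_mod_cast Subtype.mem _) h
    intro w hw
    have hreach : (G.induce (U : Set V)).Reachable w w0 := by
      rw [← hw0] at hw
      exact (SimpleGraph.ConnectedComponent.eq).1 hw
    obtain ⟨p⟩ := hreach
    have hfw : f (w : V) = f (w0 : V) := hconst p
    have hball : G.edist (f (w : V)) (w : V) ≤ (r : ℕ∞) :=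
      hdist _ (by exact_mod_cast Subtype.mem w)
    rw [hfw] at hball
    exact hball
  · -- cardinality
    rw [Set.ncard_coe_finset]
    have hc0 : (0 : ℝ) < c := lt_of_lt_of_le one_pos hc1
    rw [Finset.card_univ] at hcard
    rw [show ((Fintype.card V : ℕ) : ℝ) * ((c - 1) / c) = ((c - 1) * (Fintype.card V : ℕ)) / c
      by ring]
    rw [le_div_iff₀ hc0]
    nlinarith [hcard]
end

section
/- Define f_c(n,r) as the maximal integer f such that every graph G on f vertices in which every ball of radius r has chromatic number at most c satisfies χ(G) ≤ n. Then, setting v = f_c(n,r) + 1, one has v ≥ (v^{1/(r+1)}/(v^{1/(r+1)} − 1)) · (f_c(n−c, r) + 1), for all positive integers n > c, r, and c > 1. -/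
/-- Every ball of radius `r` in `G` has chromatic number at most `c`. -/
def LocallyColorable {V : Type*} (G : SimpleGraph V) (r c : ℕ) : Prop :=
  ∀ v : V, (G.induce (G.gball r v)).Colorable c

/-- `f` has the defining property of `f_c(n,r)`: every graph on `f` vertices with
`r`-local chromatic number at most `c` has chromatic number at most `n`. -/
def GoodF (c n r f : ℕ) : Prop :=
  ∀ G : SimpleGraph (Fin f), LocallyColorable G r c → G.Colorable n

open SimpleGraph Finset

section Helpers

variable {V W : Type*}

/-- The canonical homomorphism from `G` to `G.map ι`. -/
def homToMap (G : SimpleGraph V) (ι : V ↪ W) : G →g G.map ι :=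
  ⟨ι, fun h => SimpleGraph.map_adj_apply.mpr h⟩

lemma map_walk_pullback {G : SimpleGraph V} (ι : V ↪ W) :
    ∀ {a b : W} (p : (G.map ι).Walk a b) {u : V}, ι u = a →
      ∃ (z : V) (q : G.Walk u z), ι z = b ∧ q.length = p.length := by
  intro a b p
  induction p with
  | nil => intro u hu; exact ⟨u, .nil, hu, rfl⟩
  | @cons x y z h p ih =>
    intro u hu
    obtain ⟨u', v', hadj, hu', hv'⟩ := (SimpleGraph.map_adj ι G x y).mp h
    have huu : u' = u := ι.injective (hu'.trans hu.symm)
    subst huu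
    obtain ⟨z', q, hz, hq⟩ := ih hv'
    exact ⟨z', .cons hadj q, hz, by simp [hq]⟩

lemma edist_map_le {G : SimpleGraph V} (ι : V ↪ W) (u w : V) :
    (G.map ι).edist (ι u) (ι w) ≤ G.edist u w := by
  rcases eq_or_ne (G.edist u w) ⊤ with h | h
  · simp [h]
  · obtain ⟨p, hp⟩ := G.exists_walk_of_edist_ne_top h
    calc (G.map ι).edist (ι u) (ι w) ≤ (p.map (homToMap G ι)).length :=
          SimpleGraph.edist_le _
      _ = p.length := by rw [SimpleGraph.Walk.length_map]
      _ = G.edist u w := by exact_mod_cast hp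

lemma edist_map_ge {G : SimpleGraph V} (ι : V ↪ W) (u w : V) :
    G.edist u w ≤ (G.map ι).edist (ι u) (ι w) := by
  rcases eq_or_ne ((G.map ι).edist (ι u) (ι w)) ⊤ with h | h
  · simp [h]
  · obtain ⟨p, hp⟩ := (G.map ι).exists_walk_of_edist_ne_top h
    obtain ⟨z, q, hz, hq⟩ := map_walk_pullback ι p rfl
    have h1 : G.edist u w ≤ (q.length : ℕ∞) := by
      rw [← (ι.injective hz : z = w)]; exact SimpleGraph.edist_le q
    calc G.edist u w ≤ (q.length : ℕ∞) := h1
      _ = (p.length : ℕ∞) := by exact_mod_cast hq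
      _ = (G.map ι).edist (ι u) (ι w) := by exact_mod_cast hp

/-- Locally colorable graphs remain locally colorable after `map` along an embedding. -/
lemma locallyColorable_map {G : SimpleGraph V} (ι : V ↪ W) {r c : ℕ} (hc : 0 < c)
    (hG : LocallyColorable G r c) : LocallyColorable (G.map ι) r c := by
  classical
  intro a
  by_cases ha : ∃ u : V, ι u = a
  · obtain ⟨u, rfl⟩ := ha
    obtain ⟨col⟩ := hG u
    have key : ∀ b ∈ (G.map ι).gball r (ι u), ∃ z, ι z = b ∧ z ∈ G.gball r u := by
      intro b hb
      have hne : (G.map ι).edist (ι u) b ≠ ⊤ := by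
        intro htop
        rw [SimpleGraph.gball, Set.mem_setOf_eq, htop] at hb
        exact (ENat.coe_ne_top r) (top_le_iff.mp hb)
      obtain ⟨p, hp⟩ := (G.map ι).exists_walk_of_edist_ne_top hne
      obtain ⟨z, q, hz, hq⟩ := map_walk_pullback ι p rfl
      refine ⟨z, hz, ?_⟩
      have : G.edist u z ≤ (G.map ι).edist (ι u) (ι z) := edist_map_ge ι u z
      rw [hz] at this
      exact le_trans this hb
    refine ⟨SimpleGraph.Coloring.mk
      (fun b => col ⟨Classical.choose (key b.1 b.2),
        (Classical.choose_spec (key b.1 b.2)).2⟩) ?_⟩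
    rintro ⟨b₁, hb₁⟩ ⟨b₂, hb₂⟩ hadj
    have hadj' : (G.map ι).Adj b₁ b₂ := hadj
    obtain ⟨u₁, u₂, huadj, hu₁, hu₂⟩ := (SimpleGraph.map_adj ι G b₁ b₂).mp hadj'
    have e₁ : ι (Classical.choose (key b₁ hb₁)) = b₁ :=
      (Classical.choose_spec (key b₁ hb₁)).1
    have e₂ : ι (Classical.choose (key b₂ hb₂)) = b₂ :=
      (Classical.choose_spec (key b₂ hb₂)).1
    have h₁ : Classical.choose (key b₁ hb₁) = u₁ := ι.injective (e₁.trans hu₁.symm)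
    have h₂ : Classical.choose (key b₂ hb₂) = u₂ := ι.injective (e₂.trans hu₂.symm)
    apply col.valid
    show (G.induce (G.gball r u)).Adj _ _
    simp only [SimpleGraph.comap_adj, Function.Embedding.coe_subtype]
    rw [h₁, h₂]
    exact huadj
  · -- `a` is an isolated vertex of `G.map ι`
    refine ⟨SimpleGraph.Coloring.mk (fun _ => ⟨0, hc⟩) ?_⟩
    rintro ⟨b₁, hb₁⟩ ⟨b₂, hb₂⟩ hadj
    exfalso
    have hadj' : (G.map ι).Adj b₁ b₂ := hadj
    -- b₁ is reachable from a; if b₁ = a, then a is an endpoint of an edge, so in range ι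
    have hne : (G.map ι).edist a b₁ ≠ ⊤ := by
      intro htop
      rw [SimpleGraph.gball, Set.mem_setOf_eq, htop] at hb₁
      exact (ENat.coe_ne_top r) (top_le_iff.mp hb₁)
    obtain ⟨p, hp⟩ := (G.map ι).exists_walk_of_edist_ne_top hne
    clear hp
    cases p with
    | nil =>
      obtain ⟨u₁, u₂, _, hu₁, _⟩ := (SimpleGraph.map_adj _ _ _ _).mp hadj'
      exact ha ⟨u₁, hu₁⟩
    | cons h q =>
      obtain ⟨u₁, u₂, _, hu₁, _⟩ := (SimpleGraph.map_adj _ _ _ _).mp h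
      exact ha ⟨u₁, hu₁⟩

lemma colorable_of_map {G : SimpleGraph V} (ι : V ↪ W) {m : ℕ}
    (h : (G.map ι).Colorable m) : G.Colorable m := by
  obtain ⟨C⟩ := h
  exact ⟨SimpleGraph.Coloring.mk (fun v => C (ι v))
    (fun hadj => C.valid (SimpleGraph.map_adj_apply.mpr hadj))⟩

/-- `GoodF` applies to any graph on a fintype with few enough vertices. -/
lemma goodF_apply {c m r f : ℕ} (hgood : GoodF c m r f) (hc : 0 < c)
    [Fintype W] (H : SimpleGraph W) (hcard : Fintype.card W ≤ f)
    (hH : LocallyColorable H r c) : H.Colorable m := by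
  classical
  have : Fintype.card W ≤ Fintype.card (Fin f) := by simpa using hcard
  obtain ⟨ι⟩ := Function.Embedding.nonempty_of_card_le this
  exact colorable_of_map ι (hgood (H.map ι) (locallyColorable_map ι hc hH))

/-- The homomorphism from an induced subgraph to the ambient graph. -/
def induceVal (G : SimpleGraph V) (s : Set V) : G.induce s →g G :=
  ⟨Subtype.val, fun h => h⟩

lemma locallyColorable_induce {G : SimpleGraph V} {r c : ℕ}
    (hG : LocallyColorable G r c) (s : Set V) : LocallyColorable (G.induce s) r c := by
  intro v
  obtain ⟨col⟩ := hG (v : V)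
  have key : ∀ b : ↥s, b ∈ (G.induce s).gball r v → (b : V) ∈ G.gball r (v : V) := by
    intro b hb
    have hne : (G.induce s).edist v b ≠ ⊤ := by
      intro htop
      rw [SimpleGraph.gball, Set.mem_setOf_eq, htop] at hb
      exact (ENat.coe_ne_top r) (top_le_iff.mp hb)
    obtain ⟨p, hp⟩ := (G.induce s).exists_walk_of_edist_ne_top hne
    calc G.edist (v : V) (b : V) ≤ (p.map (induceVal G s)).length := SimpleGraph.edist_le _
      _ = (p.length : ℕ∞) := by rw [SimpleGraph.Walk.length_map]
      _ = (G.induce s).edist v b := by exact_mod_cast hp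
      _ ≤ (r : ℕ∞) := hb
  refine ⟨SimpleGraph.Coloring.mk (fun b => col ⟨(b : ↥s), key b.1 b.2⟩) ?_⟩
  rintro ⟨b₁, hb₁⟩ ⟨b₂, hb₂⟩ hadj
  apply col.valid
  exact hadj

end Helpers

section Greedy

variable {V : Type*} [Fintype V] [DecidableEq V]

/-- The greedy ball-decomposition lemma: any vertex set `S` can be split into a
`c`-colorable part `K` (a union of far-apart balls of radius `≤ r`) and a leftover
part `D` with `|D| ≤ (t-1)|K|`. -/
lemma greedy_decomp (G : SimpleGraph V) {r c : ℕ} (hc : 0 < c)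
    (hLC : LocallyColorable G r c) (t : ℝ) (ht : 1 ≤ t)
    (hcardV : (Fintype.card V : ℝ) ≤ t ^ (r + 1)) :
    ∀ S : Finset V, ∃ K D : Finset V, K ∪ D = S ∧ Disjoint K D ∧
      (∃ f : V → Fin c, ∀ u ∈ K, ∀ w ∈ K, G.Adj u w → f u ≠ f w) ∧
      ((D.card : ℝ) ≤ (t - 1) * K.card) := by
  classical
  intro S
  induction S using Finset.strongInduction with
  | _ S IH =>
  rcases S.eq_empty_or_nonempty with rfl | ⟨x, hxS⟩
  · exact ⟨∅, ∅, by simp, by simp, ⟨fun _ => ⟨0, hc⟩, by simp⟩, by simp⟩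
  · set C : ℕ → Finset V := fun j => S.filter (fun u => G.edist x u ≤ (j : ℕ∞)) with hC
    have hxC : ∀ j, x ∈ C j := by
      intro j
      simp only [hC, Finset.mem_filter]
      exact ⟨hxS, by simp [SimpleGraph.edist_self]⟩
    have hCS : ∀ j, C j ⊆ S := fun j => Finset.filter_subset _ _
    have hmono : ∀ j, C j ⊆ C (j + 1) := by
      intro j u hu
      simp only [hC, Finset.mem_filter] at hu ⊢
      refine ⟨hu.1, le_trans hu.2 ?_⟩
      exact_mod_cast Nat.cast_le.mpr (Nat.le_succ j)
    have ht0 : (0 : ℝ) ≤ t := le_trans zero_le_one ht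
    -- pigeonhole: find a radius with small growth
    have pigeon : ∃ i ≤ r, ((C (i + 1)).card : ℝ) ≤ t * (C i).card := by
      by_contra hcon
      push_neg at hcon
      have grow : ∀ j, j ≤ r + 1 → t ^ j ≤ ((C j).card : ℝ) := by
        intro j
        induction j with
        | zero =>
          intro _
          have : 1 ≤ (C 0).card := Finset.card_pos.mpr ⟨x, hxC 0⟩
          simpa using (by exact_mod_cast this : (1 : ℝ) ≤ ((C 0).card : ℝ))
        | succ j ihj =>
          intro hj
          have hjr : j ≤ r := by omega
          calc t ^ (j + 1) = t * t ^ j := by ring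
            _ ≤ t * ((C j).card : ℝ) :=
                mul_le_mul_of_nonneg_left (ihj (by omega)) ht0
            _ ≤ ((C (j + 1)).card : ℝ) := (hcon j hjr).le
      have h1 : t ^ (r + 1) ≤ t * ((C r).card : ℝ) :=
        calc t ^ (r + 1) = t * t ^ r := by ring
          _ ≤ t * ((C r).card : ℝ) := mul_le_mul_of_nonneg_left (grow r (by omega)) ht0
      have h2 : t * ((C r).card : ℝ) < ((C (r + 1)).card : ℝ) := hcon r le_rfl
      have h3 : ((C (r + 1)).card : ℝ) ≤ (Fintype.card V : ℝ) := by
        exact_mod_cast Nat.cast_le.mpr (Finset.card_le_univ _)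
      linarith
    obtain ⟨i, hir, hratio⟩ := pigeon
    -- recurse on S minus the ball of radius i+1
    set S' : Finset V := S \ C (i + 1) with hS'
    have hss : S' ⊂ S := Finset.sdiff_ssubset (hCS (i + 1)) ⟨x, hxC (i + 1)⟩
    obtain ⟨K', D', hunion', hdisj', ⟨f', hf'valid⟩, hcard'⟩ := IH S' hss
    have hK'S' : K' ⊆ S' := by rw [← hunion']; exact Finset.subset_union_left
    have hD'S' : D' ⊆ S' := by rw [← hunion']; exact Finset.subset_union_right
    -- membership facts
    have hK'nC : ∀ u ∈ K', u ∉ C (i + 1) := fun u hu =>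
      (Finset.mem_sdiff.mp (hK'S' hu)).2
    have hD'nC : ∀ u ∈ D', u ∉ C (i + 1) := fun u hu =>
      (Finset.mem_sdiff.mp (hD'S' hu)).2
    refine ⟨C i ∪ K', (C (i + 1) \ C i) ∪ D', ?_, ?_, ?_, ?_⟩
    · -- union equals S
      ext a
      simp only [Finset.mem_union, Finset.mem_sdiff]
      constructor
      · rintro ((h | h) | (⟨h, _⟩ | h))
        · exact hCS _ (hmono i h)
        · exact (Finset.mem_sdiff.mp (hK'S' h)).1
        · exact hCS _ h
        · exact (Finset.mem_sdiff.mp (hD'S' h)).1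
      · intro haS
        by_cases h1 : a ∈ C (i + 1)
        · by_cases h2 : a ∈ C i
          · exact Or.inl (Or.inl h2)
          · exact Or.inr (Or.inl ⟨h1, h2⟩)
        · have : a ∈ S' := Finset.mem_sdiff.mpr ⟨haS, h1⟩
          rw [← hunion'] at this
          rcases Finset.mem_union.mp this with h | h
          · exact Or.inl (Or.inr h)
          · exact Or.inr (Or.inr h)
    · -- disjointness
      rw [Finset.disjoint_union_left]
      constructor
      · rw [Finset.disjoint_union_right]
        refine ⟨Finset.disjoint_sdiff, ?_⟩
        rw [Finset.disjoint_left]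
        intro a ha haD'
        exact hD'nC a haD' (hmono i ha)
      · rw [Finset.disjoint_union_right]
        constructor
        · rw [Finset.disjoint_left]
          intro a ha haSd
          exact hK'nC a ha (Finset.mem_sdiff.mp haSd).1
        · exact hdisj'
    · -- coloring of K
      obtain ⟨col⟩ := hLC x
      have hball : ∀ u ∈ C i, u ∈ G.gball r x := by
        intro u hu
        simp only [hC, Finset.mem_filter] at hu
        refine le_trans hu.2 ?_
        exact_mod_cast Nat.cast_le.mpr hir
      refine ⟨fun u => if h : u ∈ C i then col ⟨u, hball u h⟩ else f' u, ?_⟩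
      intro u hu w hw hadj
      dsimp only
      have step : ∀ a ∈ C i, ∀ b, G.Adj a b → b ∈ S → b ∈ C (i + 1) := by
        intro a ha b hab hbS
        simp only [hC, Finset.mem_filter] at ha ⊢
        refine ⟨hbS, ?_⟩
        calc G.edist x b ≤ G.edist x a + G.edist a b := G.edist_triangle
          _ ≤ (i : ℕ∞) + 1 := by
              gcongr
              · exact ha.2
              · exact le_of_eq (SimpleGraph.edist_eq_one_iff_adj.mpr hab)
          _ = ((i + 1 : ℕ) : ℕ∞) := by push_cast; ring
      rcases Finset.mem_union.mp hu with huC | huK' <;>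
        rcases Finset.mem_union.mp hw with hwC | hwK'
      · -- both in the ball
        rw [dif_pos huC, dif_pos hwC]
        intro heq
        apply col.valid (by exact hadj : (G.induce (G.gball r x)).Adj
          ⟨u, hball u huC⟩ ⟨w, hball w hwC⟩) heq
      · -- u in ball, w in K' : impossible
        exfalso
        have hwS : w ∈ S := (Finset.mem_sdiff.mp (hK'S' hwK')).1
        exact hK'nC w hwK' (step u huC w hadj hwS)
      · exfalso
        have huS : u ∈ S := (Finset.mem_sdiff.mp (hK'S' huK')).1
        exact hK'nC u huK' (step w hwC u hadj.symm huS)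
      · -- both in K'
        have hu' : u ∉ C i := fun h => hK'nC u huK' (hmono i h)
        have hw' : w ∉ C i := fun h => hK'nC w hwK' (hmono i h)
        rw [dif_neg hu', dif_neg hw']
        exact hf'valid u huK' w hwK' hadj
    · -- cardinality bound
      have hdisj1 : Disjoint (C (i + 1) \ C i) D' := by
        rw [Finset.disjoint_left]
        intro a ha haD'
        exact hD'nC a haD' (Finset.mem_sdiff.mp ha).1
      have hdisj2 : Disjoint (C i) K' := by
        rw [Finset.disjoint_left]
        intro a ha haK'
        exact hK'nC a haK' (hmono i ha)
      rw [Finset.card_union_of_disjoint hdisj1, Finset.card_union_of_disjoint hdisj2]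
      have hcard_sdiff : ((C (i + 1) \ C i).card : ℝ) =
          ((C (i + 1)).card : ℝ) - ((C i).card : ℝ) := by
        rw [Finset.card_sdiff_of_subset (hmono i)]
        have := Finset.card_le_card (hmono i)
        push_cast [Nat.cast_sub this]
        ring
      push_cast
      rw [hcard_sdiff]
      have h1 : ((C (i + 1)).card : ℝ) - ((C i).card : ℝ) ≤ (t - 1) * ((C i).card : ℝ) := by
        nlinarith
      have hk0 : (0 : ℝ) ≤ (K'.card : ℝ) := Nat.cast_nonneg _
      have hc0 : (0 : ℝ) ≤ ((C i).card : ℝ) := Nat.cast_nonneg _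
      nlinarith [hcard']

end Greedy

lemma goodF_one {c n r : ℕ} (hn : 0 < n) : GoodF c n r 1 := by
  intro G _
  refine ⟨SimpleGraph.Coloring.mk (fun _ => ⟨0, hn⟩) ?_⟩
  intro v w hadj
  exact absurd (Subsingleton.elim v w) (G.ne_of_adj hadj)

theorem stmt_4 (n r c : ℕ) (hn : c < n) (hr : 0 < r) (hc : 1 < c)
    (fv fv' : ℕ) (hf : IsGreatest {f | GoodF c n r f} fv)
    (hf' : IsGreatest {f | GoodF c (n - c) r f} fv') :
    ((fv + 1 : ℕ) : ℝ) ≥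
      (((fv + 1 : ℕ) : ℝ) ^ ((1 : ℝ) / (r + 1)) /
        (((fv + 1 : ℕ) : ℝ) ^ ((1 : ℝ) / (r + 1)) - 1)) * ((fv' + 1 : ℕ) : ℝ) := by
  classical
  set v : ℕ := fv + 1 with hv
  set w : ℕ := fv' + 1 with hw
  have hn0 : 0 < n := by omega
  have hfv1 : 1 ≤ fv := hf.2 (goodF_one hn0)
  have hv2 : 2 ≤ v := by omega
  set t : ℝ := ((v : ℕ) : ℝ) ^ ((1 : ℝ) / (r + 1)) with htdef
  have hvpos : (0 : ℝ) < (v : ℝ) := by positivity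
  have hv1 : (1 : ℝ) < (v : ℝ) := by exact_mod_cast hv2
  have hexp_pos : (0 : ℝ) < 1 / ((r : ℝ) + 1) := by positivity
  have ht1 : 1 < t := by
    rw [htdef]
    exact Real.one_lt_rpow_iff_of_pos hvpos |>.mpr (Or.inl ⟨hv1, hexp_pos⟩)
  have htpos : (0 : ℝ) < t := lt_trans one_pos ht1
  have htpow : t ^ (r + 1) = (v : ℝ) := by
    rw [htdef, ← Real.rpow_natCast (((v : ℕ) : ℝ) ^ ((1 : ℝ) / (r + 1))) (r + 1),
      ← Real.rpow_mul (le_of_lt hvpos)]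
    have : (1 : ℝ) / ((r : ℝ) + 1) * ((r + 1 : ℕ) : ℝ) = 1 := by
      push_cast
      field_simp
    rw [this, Real.rpow_one]
  -- key inequality
  have key : (w : ℝ) * t ≤ (v : ℝ) * t - (v : ℝ) := by
    by_contra hcon
    push_neg at hcon
    -- counterexample graph on `Fin v`
    have hvnot : ¬GoodF c n r v := by
      intro hgood
      have := hf.2 hgood
      omega
    rw [GoodF] at hvnot
    push_neg at hvnot
    obtain ⟨G, hGlc, hGnc⟩ := hvnot
    apply hGnc
    -- greedy decomposition with S = univ
    have hcardV : (Fintype.card (Fin v) : ℝ) ≤ t ^ (r + 1) := by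
      rw [htpow]; simp
    obtain ⟨K, D, hunion, hdisj, ⟨f, hfvalid⟩, hDK⟩ :=
      greedy_decomp G (by omega : 0 < c) hGlc t (le_of_lt ht1) hcardV Finset.univ
    have hsum : K.card + D.card = v := by
      rw [← Finset.card_union_of_disjoint hdisj, hunion]
      simp
    -- |K| ≥ v / t, so |D| ≤ v - v/t < w
    have hKlb : (v : ℝ) ≤ t * (K.card : ℝ) := by
      have : (v : ℝ) = (K.card : ℝ) + (D.card : ℝ) := by exact_mod_cast hsum.symm
      nlinarith
    have hDlt : ((D.card : ℕ) : ℝ) < (w : ℝ) := by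
      have hDval : (D.card : ℝ) = (v : ℝ) - (K.card : ℝ) := by
        have : (v : ℝ) = (K.card : ℝ) + (D.card : ℝ) := by exact_mod_cast hsum.symm
        linarith
      -- from hcon : v * t - v < w * t and hKlb
      have h1 : (v : ℝ) * t - (v : ℝ) < (w : ℝ) * t := hcon
      nlinarith
    have hDcard : D.card ≤ fv' := by
      have : D.card < w := by exact_mod_cast hDlt
      omega
    -- color D with n - c colors
    have hDcol : (G.induce (↑D : Set (Fin v))).Colorable (n - c) := by
      apply goodF_apply hf'.1 (by omega : 0 < c)
      · exact le_trans (le_of_eq (by simp)) hDcard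
      · exact locallyColorable_induce hGlc _
    obtain ⟨g⟩ := hDcol
    -- assemble the n-coloring
    have hmemD : ∀ u : Fin v, u ∉ K → u ∈ D := by
      intro u hu
      have : u ∈ K ∪ D := by rw [hunion]; simp
      rcases Finset.mem_union.mp this with h | h
      · exact absurd h hu
      · exact h
    refine ⟨SimpleGraph.Coloring.mk (fun u =>
      if h : u ∈ K then ⟨(f u).1, lt_of_lt_of_le (f u).2 (le_of_lt hn)⟩
      else ⟨c + (g ⟨u, by simpa using hmemD u h⟩).1, by
        have := (g ⟨u, by simpa using hmemD u h⟩).2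
        omega⟩) ?_⟩
    intro a b hadj
    by_cases ha : a ∈ K <;> by_cases hb : b ∈ K
    · rw [dif_pos ha, dif_pos hb]
      intro heq
      apply hfvalid a ha b hb hadj
      exact Fin.ext (by simpa using congrArg Fin.val heq)
    · rw [dif_pos ha, dif_neg hb]
      intro heq
      have := congrArg Fin.val heq
      simp only at this
      have hfa : (f a).1 < c := (f a).2
      omega
    · rw [dif_neg ha, dif_pos hb]
      intro heq
      have := congrArg Fin.val heq
      simp only at this
      have hfb : (f b).1 < c := (f b).2
      omega
    · rw [dif_neg ha, dif_neg hb]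
      intro heq
      have := congrArg Fin.val heq
      simp only at this
      have hgne : g ⟨a, by simpa using hmemD a ha⟩ ≠ g ⟨b, by simpa using hmemD b hb⟩ := by
        apply g.valid
        exact hadj
      exact hgne (Fin.ext (by omega))
  -- conclude from key
  rw [ge_iff_le, div_mul_eq_mul_div, div_le_iff₀ (by linarith : (0 : ℝ) < t - 1)]
  calc t * ((w : ℕ) : ℝ) = (w : ℝ) * t := by ring
    _ ≤ (v : ℝ) * t - (v : ℝ) := key
    _ = (v : ℝ) * (t - 1) := by ring
end
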